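/- Let β be a ℤ^d-action on a compact metric space (X,ρ), let y_0 ∈ X, and let C be a connected component of the set E_k(β) of expansive k-dimensional linear subspaces of ℝ^d, regarded as an open subset of the Grassmannian G_k. Then Δ_β(y_0,V) = Δ_β(y_0,W) for all V, W ∈ C; that is, the homoclinic set along a subspace is constant on each expansive component. -/

import Mathlib

open scoped RealInnerProductSpace

noncomputable section

/-- Euclidean space `ℝ^d`. -/
abbrev Rspace (d : ℕ) : Type := EuclideanSpace ℝ (Fin d)

/-- The natural embedding `ℤ^d → ℝ^d`. -/
def intVec {d : ℕ} (n : Fin d → ℤ) : Rspace d := WithLp.toLp 2 (fun i => (n i : ℝ))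

/-- A subset `F ⊆ ℝ^d` is expansive for the `ℤ^d`-action `β` on the compact metric
space `X`: there are `ε > 0` and a thickening parameter `t > 0` such that
`sup {dist(β^n x, β^n y) : n ∈ F^t ∩ ℤ^d} ≤ ε` forces `x = y`. -/
def ExpansiveAlong {d : ℕ} {X : Type*} [MetricSpace X] (β : (Fin d → ℤ) → X ≃ₜ X)
    (F : Set (Rspace d)) : Prop :=
  ∃ ε > 0, ∃ t > 0, ∀ x y : X,
    (∀ n : Fin d → ℤ, Metric.infDist (intVec n) F ≤ t → dist (β n x) (β n y) ≤ ε) → x = y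

/-- The half-space `H_v = {x : x·v ≤ 0}` is expansive for the `ℤ^d`-action `β`
(for half-spaces no thickening is needed, since a thickened half-space is a translate
of the original one). -/
def ExpansiveHalf {d : ℕ} {X : Type*} [MetricSpace X] (β : (Fin d → ℤ) → X ≃ₜ X)
    (v : Rspace d) : Prop :=
  ∃ ε > 0, ∀ x y : X,
    (∀ n : Fin d → ℤ, ⟪intVec n, v⟫ ≤ 0 → dist (β n x) (β n y) ≤ ε) → x = y

/-- `x` is homoclinic to `y₀` along the subspace (or subset) `V ⊆ ℝ^d` for the action
`β`: for some thickening `V^t` of `V`, `dist(β^n x, β^n y₀) → 0` as `‖n‖ → ∞` with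
`n ∈ V^t ∩ ℤ^d`. -/
def HomoclinicAlong {d : ℕ} {X : Type*} [MetricSpace X] (β : (Fin d → ℤ) → X ≃ₜ X)
    (V : Set (Rspace d)) (y₀ x : X) : Prop :=
  ∃ t > 0, ∀ ε > 0, ∃ R : ℝ, ∀ n : Fin d → ℤ,
    Metric.infDist (intVec n) V ≤ t → R ≤ ‖intVec n‖ → dist (β n x) (β n y₀) < ε

/-- The Grassmannian `G_k` of `k`-dimensional linear subspaces of `ℝ^d`. -/
def Grass (d k : ℕ) : Type := {V : Submodule ℝ (Rspace d) // Module.finrank ℝ V = k}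

/-- The topology on the Grassmannian `G_k`: `V_i → V` iff `V_i ∩ S^{d-1} → V ∩ S^{d-1}`
in the Hausdorff metric (on closed subsets of `ℝ^d`). -/
instance grassTopology {d k : ℕ} : TopologicalSpace (Grass d k) :=
  TopologicalSpace.induced
    (fun V : Grass d k =>
      (⟨(V.1 : Set (Rspace d)) ∩ Metric.sphere 0 1,
        (Submodule.closed_of_finiteDimensional V.1).inter Metric.isClosed_sphere⟩ :
        TopologicalSpace.Closeds (Rspace d)))
    inferInstance


set_option maxHeartbeats 1600000

namespace BL
open Metric

lemma intVec_add {d : ℕ} (m n : Fin d → ℤ) : intVec (m + n) = intVec m + intVec n := by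
  ext i; simp [intVec]

lemma intVec_sub {d : ℕ} (m n : Fin d → ℤ) : intVec (m - n) = intVec m - intVec n := by
  ext i; simp [intVec]

lemma coord_le {d : ℕ} (x : Rspace d) (i : Fin d) : |x i| ≤ ‖x‖ := by
  have h1 : |x i| = Real.sqrt (‖x i‖ ^ 2) := by
    rw [Real.sqrt_sq_eq_abs]; simp
  rw [h1, EuclideanSpace.norm_eq]
  apply Real.sqrt_le_sqrt
  exact Finset.single_le_sum (f := fun j => ‖x j‖ ^ 2) (fun j _ => by positivity) (Finset.mem_univ i)

lemma finite_norm_le {d : ℕ} (r : ℝ) : {n : Fin d → ℤ | ‖intVec n‖ ≤ r}.Finite := by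
  apply Set.Finite.subset (Set.finite_Icc (fun _ : Fin d => (-⌈r⌉)) (fun _ => ⌈r⌉))
  intro n hn
  simp only [Set.mem_setOf_eq] at hn
  constructor <;> intro i
  · have := (coord_le (intVec n) i).trans hn
    have h2 : |(n i : ℝ)| ≤ (⌈r⌉ : ℝ) := (show |(n i : ℝ)| ≤ r from this).trans (Int.le_ceil r)
    have := (abs_le.mp h2).1
    exact_mod_cast this
  · have := (coord_le (intVec n) i).trans hn
    have h2 : |(n i : ℝ)| ≤ (⌈r⌉ : ℝ) := (show |(n i : ℝ)| ≤ r from this).trans (Int.le_ceil r)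
    have := (abs_le.mp h2).2
    exact_mod_cast this

lemma exists_int_near {d : ℕ} (q : Rspace d) : ∃ n : Fin d → ℤ, ‖q - intVec n‖ ≤ (d : ℝ) := by
  refine ⟨fun i => round (q i), ?_⟩
  have h1 : ‖q - intVec (fun i => round (q i))‖ ≤ Real.sqrt ((d : ℝ)) := by
    rw [EuclideanSpace.norm_eq]
    apply Real.sqrt_le_sqrt
    have : ∀ i : Fin d, ‖(q - intVec (fun i => round (q i))) i‖ ^ 2 ≤ 1 := by
      intro i
      have : ‖(q - intVec (fun i => round (q i))) i‖ = |q i - round (q i)| := by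
        simp [intVec]
      rw [this]
      have h := abs_sub_round (q i)
      nlinarith [abs_nonneg (q i - round (q i))]
    calc (Finset.univ.sum fun i => ‖(q - intVec (fun i => round (q i))) i‖ ^ 2)
        ≤ Finset.univ.sum (fun _ : Fin d => (1:ℝ)) := Finset.sum_le_sum (fun i _ => this i)
      _ = d := by simp
  refine h1.trans ?_
  rcases Nat.eq_zero_or_pos d with h | h
  · subst h; simp
  · have h1 : (1:ℝ) ≤ (d:ℝ) := by exact_mod_cast h
    calc Real.sqrt (d:ℝ) ≤ Real.sqrt ((d:ℝ)^2) := Real.sqrt_le_sqrt (by nlinarith)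
      _ = d := by rw [Real.sqrt_sq (Nat.cast_nonneg d)]


lemma infDist_sub {d : ℕ} (U : Submodule ℝ (Rspace d)) (u : Rspace d) :
    infDist u (U : Set (Rspace d)) = ‖u - (Submodule.orthogonalProjectionOnto U u : Rspace d)‖ := by
  apply le_antisymm
  · have h := infDist_le_dist_of_mem (x := u) (SetLike.coe_mem (Submodule.orthogonalProjectionOnto U u))
    rwa [dist_eq_norm] at h
  · rw [show ‖u - (Submodule.orthogonalProjectionOnto U u : Rspace d)‖ = ⨅ x : U, ‖u - x‖ from
      Submodule.starProjection_minimal u, infDist_eq_iInf]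
    apply ciInf_mono ⟨0, fun w hw => by rcases hw with ⟨v, rfl⟩; positivity⟩
    intro v
    rw [dist_eq_norm]

lemma norm_proj_le {d : ℕ} (U : Submodule ℝ (Rspace d)) (u : Rspace d) :
    ‖(Submodule.orthogonalProjectionOnto U u : Rspace d)‖ ≤ ‖u‖ := by
  have h := (Submodule.orthogonalProjectionOnto U).le_opNorm u
  have h2 := Submodule.orthogonalProjectionOnto_norm_le U
  calc ‖(Submodule.orthogonalProjectionOnto U u : Rspace d)‖ = ‖Submodule.orthogonalProjectionOnto U u‖ := rfl
    _ ≤ ‖Submodule.orthogonalProjectionOnto U‖ * ‖u‖ := h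
    _ ≤ 1 * ‖u‖ := by apply mul_le_mul_of_nonneg_right h2 (norm_nonneg u)
    _ = ‖u‖ := one_mul _

lemma infDist_add {d : ℕ} (U : Submodule ℝ (Rspace d)) (a b : Rspace d) :
    infDist (a + b) (U : Set (Rspace d)) ≤ infDist a (U : Set (Rspace d)) + infDist b (U : Set (Rspace d)) := by
  have hm : (Submodule.orthogonalProjectionOnto U a : Rspace d) + (Submodule.orthogonalProjectionOnto U b : Rspace d) ∈ (U : Set (Rspace d)) :=
    U.add_mem (SetLike.coe_mem _) (SetLike.coe_mem _)
  have h := infDist_le_dist_of_mem (x := a + b) hm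
  rw [dist_eq_norm] at h
  rw [infDist_sub U a, infDist_sub U b]
  calc infDist (a + b) (U : Set (Rspace d)) ≤ ‖a + b - ((Submodule.orthogonalProjectionOnto U a : Rspace d) + (Submodule.orthogonalProjectionOnto U b : Rspace d))‖ := h
    _ = ‖(a - (Submodule.orthogonalProjectionOnto U a : Rspace d)) + (b - (Submodule.orthogonalProjectionOnto U b : Rspace d))‖ := by congr 1; abel
    _ ≤ _ := norm_add_le _ _


/-- pointwise comparison of distances to two subspaces -/
def cle {d : ℕ} (U₁ U₂ : Submodule ℝ (Rspace d)) (η : ℝ) : Prop :=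
  ∀ u : Rspace d, infDist u (U₂ : Set (Rspace d)) ≤ infDist u (U₁ : Set (Rspace d)) + η * ‖u‖

lemma cle_self {d : ℕ} (U : Submodule ℝ (Rspace d)) {η : ℝ} (hη : 0 ≤ η) : cle U U η := by
  intro u
  have : 0 ≤ η * ‖u‖ := by positivity
  linarith


lemma approx {d : ℕ} (V : Submodule ℝ (Rspace d)) (t₀ t₁ : ℝ) (ht₀ : 0 < t₀) :
    ∃ r : ℝ, ∀ m : Fin d → ℤ, infDist (intVec m) (V : Set (Rspace d)) ≤ t₁ →
      ∃ c : Fin d → ℤ, ‖intVec c‖ ≤ r ∧ infDist (intVec (m - c)) (V : Set (Rspace d)) ≤ t₀ := by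
  set P : Rspace d → Rspace d := fun u => u - (Submodule.orthogonalProjectionOnto V u : Rspace d) with hP
  set K : Set (Rspace d) :=
    closedBall 0 t₁ ∩ closure (Set.range fun c : Fin d → ℤ => P (intVec c)) with hK
  have hKc : IsCompact K := (isCompact_closedBall 0 t₁).inter_right isClosed_closure
  have hcover : K ⊆ ⋃ c : Fin d → ℤ, ball (P (intVec c)) t₀ := by
    intro g hg
    have hg2 : g ∈ closure (Set.range fun c : Fin d → ℤ => P (intVec c)) := hg.2
    rw [Metric.mem_closure_iff] at hg2
    obtain ⟨y, ⟨c, rfl⟩, hy⟩ := hg2 t₀ ht₀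
    exact Set.mem_iUnion.mpr ⟨c, by simpa [dist_comm] using hy⟩
  obtain ⟨F, hF⟩ := hKc.elim_finite_subcover _ (fun c => isOpen_ball) hcover
  refine ⟨F.sum fun c => ‖intVec c‖, ?_⟩
  intro m hm
  have hgK : P (intVec m) ∈ K := by
    constructor
    · rw [mem_closedBall, dist_eq_norm, sub_zero]
      rw [infDist_sub] at hm
      exact hm
    · exact subset_closure ⟨m, rfl⟩
  obtain ⟨c, hcF, hc⟩ := Set.mem_iUnion₂.mp (hF hgK)
  refine ⟨c, ?_, ?_⟩
  · exact Finset.single_le_sum (fun c _ => norm_nonneg (intVec c)) hcF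
  · rw [infDist_sub]
    have hlin : intVec (m - c) - (Submodule.orthogonalProjectionOnto V (intVec (m - c)) : Rspace d)
        = P (intVec m) - P (intVec c) := by
      rw [intVec_sub, hP]
      simp only [map_sub]
      push_cast [Submodule.coe_sub]
      abel
    rw [hlin]
    have : dist (P (intVec m)) (P (intVec c)) < t₀ := mem_ball.mp hc
    rw [dist_eq_norm] at this
    exact this.le


section Dyn
variable {d : ℕ} {X : Type*} [MetricSpace X] [CompactSpace X]
  (β : (Fin d → ℤ) → X ≃ₜ X)

/-- uniform equicontinuity of finitely many `β c` -/
lemma unif (r : ℝ) {ε : ℝ} (hε : 0 < ε) :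
    ∃ δ > 0, ∀ c : Fin d → ℤ, ‖intVec c‖ ≤ r → ∀ u v : X, dist u v ≤ δ →
      dist (β c u) (β c v) ≤ ε := by
  have huc : ∀ c : Fin d → ℤ, ∃ δ > 0, ∀ u v : X, dist u v ≤ δ → dist (β c u) (β c v) ≤ ε := by
    intro c
    have h := CompactSpace.uniformContinuous_of_continuous (β c).continuous
    rw [Metric.uniformContinuous_iff] at h
    obtain ⟨δ, hδ, hspec⟩ := h ε hε
    exact ⟨δ/2, by linarith, fun u v huv => (hspec (lt_of_le_of_lt huv (by linarith))).le⟩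
  choose δf hδf hspec using huc
  set F := (finite_norm_le (d := d) r).toFinset with hF
  rcases F.eq_empty_or_nonempty with h | h
  · refine ⟨1, one_pos, fun c hc => ?_⟩
    exfalso
    have hcF : c ∈ F := (Set.Finite.mem_toFinset _).mpr hc
    rw [h] at hcF
    exact Finset.notMem_empty c hcF
  · refine ⟨F.inf' h δf, ?_, ?_⟩
    · exact (Finset.lt_inf'_iff h).mpr fun c _ => hδf c
    · intro c hc u v huv
      have hcF : c ∈ F := (Set.Finite.mem_toFinset _).mpr hc
      exact hspec c u v (huv.trans (Finset.inf'_le δf hcF))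

variable (hβ : ∀ m n : Fin d → ℤ, ∀ x : X, β (m + n) x = β m (β n x))

/-- coding lemma: windows of data along an expansive subspace control any single site -/
lemma coding (U₁ : Submodule ℝ (Rspace d)) (ε t : ℝ) (hε : 0 < ε)
    (hexp : ∀ x y : X, (∀ n : Fin d → ℤ, infDist (intVec n) (U₁ : Set (Rspace d)) ≤ t →
      dist (β n x) (β n y) ≤ ε) → x = y)
    {δ : ℝ} (hδ : 0 < δ) (c : Fin d → ℤ) :
    ∃ r > 0, ∀ x y : X,
      (∀ m : Fin d → ℤ, infDist (intVec m) (U₁ : Set (Rspace d)) ≤ t → ‖intVec m‖ ≤ r →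
        dist (β m x) (β m y) ≤ ε) → dist (β c x) (β c y) ≤ δ := by
  by_contra hcon
  push_neg at hcon
  have hseq : ∀ k : ℕ, ∃ p : X × X,
      (∀ m : Fin d → ℤ, infDist (intVec m) (U₁ : Set (Rspace d)) ≤ t → ‖intVec m‖ ≤ (k:ℝ) + 1 →
        dist (β m p.1) (β m p.2) ≤ ε) ∧ δ < dist (β c p.1) (β c p.2) := by
    intro k
    obtain ⟨x, y, hw, hd⟩ := hcon ((k:ℝ)+1) (by positivity)
    exact ⟨(x, y), hw, hd⟩
  choose u hu hd using hseq
  obtain ⟨⟨A, B⟩, φ, hφ, hlim⟩ := CompactSpace.tendsto_subseq u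
  have hAB : A = B := by
    apply hexp
    intro m hm
    have hcont : Filter.Tendsto (fun k => dist (β m (u (φ k)).1) (β m (u (φ k)).2))
        Filter.atTop (nhds (dist (β m A) (β m B))) := by
      have h1 : Continuous fun p : X × X => dist (β m p.1) (β m p.2) :=
        (continuous_dist.comp (((β m).continuous.comp continuous_fst).prodMk
          ((β m).continuous.comp continuous_snd)))
      exact (h1.continuousAt).tendsto.comp hlim
    refine le_of_tendsto hcont ?_
    rw [Filter.eventually_atTop]
    refine ⟨⌈‖intVec m‖⌉₊, fun k hk => ?_⟩
    apply hu (φ k) m hm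
    have h2 : ‖intVec m‖ ≤ (k : ℝ) := (Nat.le_ceil _).trans (by exact_mod_cast hk)
    have h3 : (k : ℝ) ≤ (φ k : ℝ) := by exact_mod_cast hφ.le_apply
    linarith
  have hlim2 : Filter.Tendsto (fun k => dist (β c (u (φ k)).1) (β c (u (φ k)).2))
      Filter.atTop (nhds (dist (β c A) (β c B))) := by
    have h1 : Continuous fun p : X × X => dist (β c p.1) (β c p.2) :=
      (continuous_dist.comp (((β c).continuous.comp continuous_fst).prodMk
        ((β c).continuous.comp continuous_snd)))
    exact (h1.continuousAt).tendsto.comp hlim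
  have hge : δ ≤ dist (β c A) (β c B) :=
    ge_of_tendsto hlim2 (Filter.Eventually.of_forall fun k => (hd (φ k)).le)
  rw [hAB] at hge
  simp at hge
  linarith

/-- coding over a ball of target sites -/
lemma coding_ball (U₁ : Submodule ℝ (Rspace d)) (ε t : ℝ) (hε : 0 < ε)
    (hexp : ∀ x y : X, (∀ n : Fin d → ℤ, infDist (intVec n) (U₁ : Set (Rspace d)) ≤ t →
      dist (β n x) (β n y) ≤ ε) → x = y)
    {δ : ℝ} (hδ : 0 < δ) (L : ℝ) :
    ∃ r > 0, ∀ x y : X,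
      (∀ m : Fin d → ℤ, infDist (intVec m) (U₁ : Set (Rspace d)) ≤ t → ‖intVec m‖ ≤ r →
        dist (β m x) (β m y) ≤ ε) →
      ∀ c : Fin d → ℤ, ‖intVec c‖ ≤ L → dist (β c x) (β c y) ≤ δ := by
  have h := fun c : Fin d → ℤ => coding β U₁ ε t hε hexp hδ c
  choose rf hrf hspec using h
  set F := (finite_norm_le (d := d) L).toFinset with hF
  have hsum : 0 ≤ F.sum fun c => rf c := Finset.sum_nonneg fun c _ => (hrf c).le
  refine ⟨1 + F.sum fun c => rf c, by linarith, ?_⟩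
  intro x y hw c hcL
  have hcF : c ∈ F := (Set.Finite.mem_toFinset _).mpr hcL
  apply hspec c x y
  intro m hm hmr
  apply hw m hm
  have h1 : rf c ≤ F.sum fun c => rf c := Finset.single_le_sum (fun c _ => (hrf c).le) hcF
  linarith


include hβ in
lemma widen (V : Submodule ℝ (Rspace d)) (y₀ x : X)
    (h : HomoclinicAlong β (V : Set (Rspace d)) y₀ x) (t₁ : ℝ) (ht₁ : 0 < t₁) :
    ∀ ε > 0, ∃ R : ℝ, ∀ n : Fin d → ℤ,
      infDist (intVec n) (V : Set (Rspace d)) ≤ t₁ → R ≤ ‖intVec n‖ →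
      dist (β n x) (β n y₀) < ε := by
  obtain ⟨t₀, ht₀, hdec⟩ := h
  intro ε hε
  obtain ⟨r, hr⟩ := approx V t₀ t₁ ht₀
  obtain ⟨δ, hδ, hu⟩ := unif β r (half_pos hε)
  obtain ⟨R, hR⟩ := hdec δ hδ
  refine ⟨R + r + 1, ?_⟩
  intro m hm hnorm
  obtain ⟨c, hcr, hmc⟩ := hr m hm
  have key : dist (β (m - c) x) (β (m - c) y₀) < δ := by
    apply hR _ hmc
    have h2 : ‖intVec m‖ - ‖intVec c‖ ≤ ‖intVec (m - c)‖ := by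
      rw [intVec_sub]; exact norm_sub_norm_le _ _
    linarith
  have h3 : dist (β c (β (m-c) x)) (β c (β (m-c) y₀)) ≤ ε/2 := hu c hcr _ _ key.le
  rw [← hβ, ← hβ] at h3
  have hmc2 : c + (m - c) = m := by ring
  rw [hmc2] at h3
  linarith


include hβ in
lemma main (hβ0 : ∀ x : X, β 0 x = x) (U₁ : Submodule ℝ (Rspace d)) (ε t : ℝ)
    (hε : 0 < ε) (ht : 0 < t)
    (hexp : ∀ x y : X, (∀ n : Fin d → ℤ, infDist (intVec n) (U₁ : Set (Rspace d)) ≤ t →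
      dist (β n x) (β n y) ≤ ε) → x = y) :
    ∃ η > 0, ∃ t' > 0, ∀ Ua Ub : Submodule ℝ (Rspace d),
      cle U₁ Ua η → cle Ua U₁ η → cle U₁ Ub η → cle Ub U₁ η →
      ∀ x y₀ : X,
        (∀ ε' > 0, ∃ R : ℝ, ∀ n : Fin d → ℤ, infDist (intVec n) (Ua : Set (Rspace d)) ≤ t' →
          R ≤ ‖intVec n‖ → dist (β n x) (β n y₀) ≤ ε') →
        (∀ ε' > 0, ∃ R : ℝ, ∀ n : Fin d → ℤ, infDist (intVec n) (Ub : Set (Rspace d)) ≤ t' →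
          R ≤ ‖intVec n‖ → dist (β n x) (β n y₀) ≤ ε') := by
  obtain ⟨D, hD⟩ : ∃ D : ℝ, D = (d : ℝ) := ⟨_, rfl⟩
  have hD0 : (0:ℝ) ≤ D := by rw [hD]; exact Nat.cast_nonneg d
  obtain ⟨L, hL⟩ : ∃ L : ℝ, L = t + 2*D + 2 := ⟨_, rfl⟩
  have hL0 : 0 < L := by rw [hL]; linarith
  obtain ⟨r₁, hr₁pos, hcode⟩ := coding_ball β U₁ ε t hε hexp hε L
  obtain ⟨C, hC⟩ : ∃ C : ℝ, C = L + r₁ := ⟨_, rfl⟩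
  have hC0 : 0 < C := by rw [hC]; linarith
  obtain ⟨η, hη⟩ : ∃ η : ℝ, η = min 1 (min (1/(r₁+1)) (1/(4*(C+1)))) := ⟨_, rfl⟩
  have hηpos : 0 < η := by
    rw [hη]
    apply lt_min one_pos
    apply lt_min
    · positivity
    · positivity
  have hη1 : η ≤ 1 := by rw [hη]; exact min_le_left _ _
  have hηr₁ : η * r₁ ≤ 1 := by
    have h1 : η ≤ 1/(r₁+1) := by rw [hη]; exact le_trans (min_le_right _ _) (min_le_left _ _)
    have h2 : η * r₁ ≤ (1/(r₁+1)) * r₁ := mul_le_mul_of_nonneg_right h1 hr₁pos.le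
    have h3 : (1/(r₁+1)) * r₁ ≤ 1 := by
      rw [div_mul_eq_mul_div, one_mul, div_le_one (by linarith)]
      linarith
    linarith
  have hηC : 2 * (C * η) ≤ 1/2 := by
    have h1 : η ≤ 1/(4*(C+1)) := by rw [hη]; exact le_trans (min_le_right _ _) (min_le_right _ _)
    have h2 : C * η ≤ C * (1/(4*(C+1))) := mul_le_mul_of_nonneg_left h1 hC0.le
    have h3 : C * (1/(4*(C+1))) ≤ 1/4 := by
      rw [mul_one_div, div_le_div_iff₀ (by linarith) (by norm_num)]
      linarith
    linarith
  refine ⟨η, hηpos, L, hL0, ?_⟩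
  intro Ua Ub hU1a hUa1 hU1b hUb1 x y₀ hdata
  obtain ⟨R₀, hR₀⟩ := hdata ε hε
  have G : ∀ j : ℕ, ∀ n : Fin d → ℤ, infDist (intVec n) (Ua : Set (Rspace d)) ≤ L + j →
      R₀ + C * j ≤ ‖intVec n‖ → dist (β n x) (β n y₀) ≤ ε := by
    intro j
    induction j with
    | zero =>
      intro n h1 h2
      exact hR₀ n (by simpa using h1) (by simpa using h2)
    | succ j ih =>
      intro n h1 h2
      push_cast at h1 h2
      by_cases hcase : infDist (intVec n) (Ua : Set (Rspace d)) ≤ L + j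
      · exact ih n hcase (by nlinarith)
      · push_neg at hcase
        set p : Rspace d := (Submodule.orthogonalProjectionOnto Ua (intVec n) : Rspace d) with hp
        set e : Rspace d := intVec n - p with he
        have hen : ‖e‖ = infDist (intVec n) (Ua : Set (Rspace d)) := (infDist_sub Ua (intVec n)).symm
        set M : ℝ := t + D + 2 with hM
        have hMpos : 0 < M := by simp only [hM]; linarith
        have hMle : M ≤ ‖e‖ := by
          rw [hen]
          have : M ≤ L := by simp only [hM]; rw [hL]; linarith
          have hj : (0:ℝ) ≤ j := Nat.cast_nonneg j
          linarith
        have hepos : 0 < ‖e‖ := lt_of_lt_of_le hMpos hMle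
        have heup : ‖e‖ ≤ L + j + 1 := by rw [hen]; linarith
        set q : Rspace d := intVec n - (M/‖e‖) • e with hq
        have hqd : infDist q (Ua : Set (Rspace d)) ≤ ‖e‖ - M := by
          have hqp : q - p = (1 - M/‖e‖) • e := by
            rw [hq, he, sub_smul, one_smul]
            abel
          have h4 := infDist_le_dist_of_mem (x := q) (SetLike.coe_mem (Submodule.orthogonalProjectionOnto Ua (intVec n)))
          rw [dist_eq_norm, ← hp] at h4
          have h5 : ‖q - p‖ = ‖e‖ - M := by
            rw [hqp, norm_smul, Real.norm_eq_abs, abs_of_nonneg, sub_mul, one_mul,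
              div_mul_cancel₀ _ (ne_of_gt hepos)]
            rw [sub_nonneg, div_le_one hepos]
            exact hMle
          rw [h5] at h4
          exact h4
        obtain ⟨n₀, hn₀⟩ := exists_int_near q
        have hd0 : infDist (intVec n₀) (Ua : Set (Rspace d)) ≤ ‖e‖ - M + D := by
          have h6 := infDist_le_infDist_add_dist (x := intVec n₀) (y := q) (s := (Ua : Set (Rspace d)))
          have h7 : dist (intVec n₀) q ≤ D := by
            rw [hD, dist_comm, dist_eq_norm]; exact hn₀
          linarith
        have hnq : ‖intVec n - q‖ = M := by
          have : intVec n - q = (M/‖e‖) • e := by rw [hq]; abel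
          rw [this, norm_smul, Real.norm_eq_abs, abs_of_pos (by positivity),
            div_mul_cancel₀ _ (ne_of_gt hepos)]
        have hnn₀ : ‖intVec n - intVec n₀‖ ≤ M + D := by
          have : intVec n - intVec n₀ = (intVec n - q) + (q - intVec n₀) := by abel
          rw [this]
          exact (norm_add_le _ _).trans (by linarith [hnq, hn₀])
        have hwindow : ∀ m' : Fin d → ℤ, infDist (intVec m') (U₁ : Set (Rspace d)) ≤ t →
            ‖intVec m'‖ ≤ r₁ → dist (β m' (β n₀ x)) (β m' (β n₀ y₀)) ≤ ε := by
          intro m' hm1 hm2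
          rw [← hβ, ← hβ]
          apply ih (m' + n₀)
          · have h8 : infDist (intVec (m' + n₀)) (Ua : Set (Rspace d)) ≤
                infDist (intVec m') (Ua : Set (Rspace d)) + infDist (intVec n₀) (Ua : Set (Rspace d)) := by
              rw [intVec_add]; exact infDist_add Ua _ _
            have h9 : infDist (intVec m') (Ua : Set (Rspace d)) ≤ t + η * r₁ := by
              have := hU1a (intVec m')
              have h10 : η * ‖intVec m'‖ ≤ η * r₁ := mul_le_mul_of_nonneg_left hm2 hηpos.le
              linarith
            have hLM : M + D = L := by simp only [hM]; rw [hL]; ring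
            linarith
          · have h11 : ‖intVec n‖ ≤ ‖intVec n - intVec n₀‖ + ‖intVec (m' + n₀)‖ + ‖intVec m'‖ := by
              have hiden : intVec n = (intVec n - intVec n₀) + (intVec (m' + n₀)) - intVec m' := by
                rw [intVec_add]; abel
              calc ‖intVec n‖ = ‖(intVec n - intVec n₀) + (intVec (m' + n₀)) - intVec m'‖ := by rw [← hiden]
                _ ≤ ‖(intVec n - intVec n₀) + (intVec (m' + n₀))‖ + ‖intVec m'‖ := norm_sub_le _ _
                _ ≤ ‖intVec n - intVec n₀‖ + ‖intVec (m' + n₀)‖ + ‖intVec m'‖ := by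
                    linarith [norm_add_le (intVec n - intVec n₀) (intVec (m' + n₀))]
            have hCL : C = M + D + r₁ := by simp only [hM]; rw [hC, hL]; ring
            linarith
        have hfinal := hcode (β n₀ x) (β n₀ y₀) hwindow (n - n₀) (by rw [intVec_sub]; exact hnn₀.trans (by simp only [hM]; rw [hL]; linarith))
        rw [← hβ, ← hβ, sub_add_cancel] at hfinal
        exact hfinal
  have G' : ∀ s : ℝ, 0 ≤ s → ∀ n : Fin d → ℤ, infDist (intVec n) (Ua : Set (Rspace d)) ≤ L + s →
      R₀ + C * (s + 1) ≤ ‖intVec n‖ → dist (β n x) (β n y₀) ≤ ε := by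
    intro s hs n h1 h2
    apply G ⌈s⌉₊ n
    · exact h1.trans (by linarith [Nat.le_ceil s])
    · have h3 : (⌈s⌉₊ : ℝ) ≤ s + 1 := by
        have := Nat.ceil_lt_add_one hs
        linarith
      have h4 : C * (⌈s⌉₊ : ℝ) ≤ C * (s+1) := mul_le_mul_of_nonneg_left h3 hC0.le
      linarith
  intro ε' hε'
  obtain ⟨r₂, hr₂pos, hcode2⟩ := coding β U₁ ε t hε hexp hε' (0 : Fin d → ℤ)
  refine ⟨2*(|R₀| + C*(t + r₂ + 1) + r₂) + 1, ?_⟩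
  intro n h1 h2
  obtain ⟨s, hs⟩ : ∃ s : ℝ, s = 2*η*‖intVec n‖ + t + η*r₂ := ⟨_, rfl⟩
  have hs0 : 0 ≤ s := by
    have : (0:ℝ) ≤ ‖intVec n‖ := norm_nonneg _
    rw [hs]
    nlinarith [hηpos.le, hr₂pos.le]
  have hfin : ∀ m' : Fin d → ℤ, infDist (intVec m') (U₁ : Set (Rspace d)) ≤ t →
      ‖intVec m'‖ ≤ r₂ → dist (β m' (β n x)) (β m' (β n y₀)) ≤ ε := by
    intro m' hm1 hm2
    rw [← hβ, ← hβ]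
    apply G' s hs0 (m' + n)
    · have h8 : infDist (intVec (m' + n)) (Ua : Set (Rspace d)) ≤
          infDist (intVec m') (Ua : Set (Rspace d)) + infDist (intVec n) (Ua : Set (Rspace d)) := by
        rw [intVec_add]; exact infDist_add Ua _ _
      have h9 : infDist (intVec m') (Ua : Set (Rspace d)) ≤ t + η * r₂ := by
        have := hU1a (intVec m')
        have h10 : η * ‖intVec m'‖ ≤ η * r₂ := mul_le_mul_of_nonneg_left hm2 hηpos.le
        linarith
      have h11 : infDist (intVec n) (Ua : Set (Rspace d)) ≤ L + 2*η*‖intVec n‖ := by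
        have ha := hU1a (intVec n)
        have hb := hUb1 (intVec n)
        linarith
      rw [hs]
      linarith
    · have h12 : ‖intVec n‖ ≤ ‖intVec (m' + n)‖ + r₂ := by
        have : intVec n = intVec (m' + n) - intVec m' := by rw [intVec_add]; abel
        rw [this]
        calc ‖intVec (m' + n) - intVec m'‖ ≤ ‖intVec (m' + n)‖ + ‖intVec m'‖ := norm_sub_le _ _
          _ ≤ ‖intVec (m' + n)‖ + r₂ := by linarith
      have h13 : C * (s + 1) ≤ 2*(C*η)*‖intVec n‖ + C*(t + r₂ + 1) := by
        rw [hs]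
        have hr2 : η * r₂ ≤ r₂ := by nlinarith [hr₂pos.le]
        nlinarith [hC0.le]
      have h14 : 2*(C*η)*‖intVec n‖ ≤ (1/2) * ‖intVec n‖ :=
        mul_le_mul_of_nonneg_right hηC (norm_nonneg _)
      have h15 : |R₀| ≥ R₀ := le_abs_self R₀
      have h16 : R₀ + C * (s + 1) ≤ R₀ + 1/2 * ‖intVec n‖ + C*(t + r₂ + 1) := by linarith
      have h17 : |R₀| + C*(t + r₂ + 1) + r₂ + 1/2 ≤ 1/2 * ‖intVec n‖ := by linarith
      linarith
  have hconc := hcode2 (β n x) (β n y₀) hfin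
  rw [← hβ, ← hβ] at hconc
  simp only [zero_add] at hconc
  exact hconc


end Dyn

lemma hit_open {d k : ℕ} (y : Rspace d) (r : ℝ) :
    IsOpen {U' : Grass d k | ∃ w : Rspace d, w ∈ U'.1 ∧ ‖w‖ = 1 ∧ ‖w - y‖ < r} := by
  set H : TopologicalSpace.Closeds (Rspace d) :=
    ⟨(Metric.ball y r)ᶜ, Metric.isOpen_ball.isClosed_compl⟩ with hH
  have hopen : IsOpen {A : TopologicalSpace.Closeds (Rspace d) | ¬ A ≤ H} := by
    rw [EMetric.isOpen_iff]
    intro A hA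
    have hA' : ¬ ((A : Set (Rspace d)) ⊆ H) := hA
    rw [Set.not_subset] at hA'
    obtain ⟨w, hwA, hwH⟩ := hA'
    have hw : dist w y < r := by simpa [hH] using hwH
    refine ⟨ENNReal.ofReal (r - dist w y), by simpa using hw, ?_⟩
    intro B hB hle
    rw [Metric.mem_eball, TopologicalSpace.Closeds.edist_eq, hausdorffEDist_comm] at hB
    obtain ⟨w', hw'B, hww'⟩ := exists_edist_lt_of_hausdorffEDist_lt hwA hB
    rw [edist_dist, ENNReal.ofReal_lt_ofReal_iff (by linarith)] at hww'
    have hw'H : w' ∈ (H : Set (Rspace d)) := hle hw'B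
    simp [hH] at hw'H
    linarith [dist_triangle w' w y, dist_comm w w']
  have hcont : Continuous (fun V : Grass d k =>
      (⟨(V.1 : Set (Rspace d)) ∩ Metric.sphere 0 1,
        (Submodule.closed_of_finiteDimensional V.1).inter Metric.isClosed_sphere⟩ :
        TopologicalSpace.Closeds (Rspace d))) := continuous_induced_dom
  have heq : {U' : Grass d k | ∃ w : Rspace d, w ∈ U'.1 ∧ ‖w‖ = 1 ∧ ‖w - y‖ < r} =
      (fun V : Grass d k =>
      (⟨(V.1 : Set (Rspace d)) ∩ Metric.sphere 0 1,
        (Submodule.closed_of_finiteDimensional V.1).inter Metric.isClosed_sphere⟩ :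
        TopologicalSpace.Closeds (Rspace d))) ⁻¹' {A : TopologicalSpace.Closeds (Rspace d) | ¬ A ≤ H} := by
    ext U'
    simp only [Set.mem_setOf_eq, Set.mem_preimage, Set.mem_setOf_eq]
    constructor
    · rintro ⟨w, hw1, hw2, hw3⟩
      intro hle
      have : w ∈ ((H : Set (Rspace d))) := hle ⟨hw1, by rwa [mem_sphere_zero_iff_norm]⟩
      rw [hH] at this
      simp only [TopologicalSpace.Closeds.coe_mk, Set.mem_compl_iff, mem_ball, dist_eq_norm] at this
      exact this hw3
    · intro hle
      have hle' : ¬ ((U'.1 : Set (Rspace d)) ∩ Metric.sphere 0 1 ⊆ (H : Set (Rspace d))) :=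
        fun hsub => hle fun x hx => hsub hx
      rw [Set.not_subset] at hle'
      obtain ⟨w, ⟨hw1, hw2⟩, hw3⟩ := hle'
      refine ⟨w, hw1, mem_sphere_zero_iff_norm.mp hw2, ?_⟩
      rw [hH] at hw3
      simp only [TopologicalSpace.Closeds.coe_mk, Set.mem_compl_iff, mem_ball, dist_eq_norm,
        not_not] at hw3
      exact hw3
  rw [heq]
  exact hopen.preimage hcont

lemma nbhd {d k : ℕ} (U : Grass d k) {η : ℝ} (hη : 0 < η) :
    ∃ O : Set (Grass d k), IsOpen O ∧ U ∈ O ∧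
      ∀ U' ∈ O, cle U.1 U'.1 η ∧ cle U'.1 U.1 η := by
  classical
  have hfr : Module.finrank ℝ U.1 = k := U.2
  set B := (stdOrthonormalBasis ℝ U.1).reindex (finCongr hfr) with hB
  set v : Fin k → Rspace d := fun i => (B i : Rspace d) with hv
  obtain ⟨δ, hδpos, hδ1, hδη⟩ : ∃ δ : ℝ, 0 < δ ∧ ((k:ℝ)+1)*δ ≤ 1/2 ∧ 2*(((k:ℝ)+1)*δ) ≤ η := by
    refine ⟨min ((1:ℝ)/(4*((k:ℝ)+1))) (η/(4*((k:ℝ)+1))), ?_, ?_, ?_⟩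
    · have hk : (0:ℝ) < (k:ℝ)+1 := by positivity
      apply lt_min <;> positivity
    · have h1 : min ((1:ℝ)/(4*((k:ℝ)+1))) (η/(4*((k:ℝ)+1))) ≤ (1:ℝ)/(4*((k:ℝ)+1)) := min_le_left _ _
      have hk : (0:ℝ) < (k:ℝ)+1 := by positivity
      have := mul_le_mul_of_nonneg_left h1 hk.le
      rw [mul_one_div] at this
      calc ((k:ℝ)+1) * min ((1:ℝ)/(4*((k:ℝ)+1))) (η/(4*((k:ℝ)+1))) ≤ ((k:ℝ)+1)/(4*((k:ℝ)+1)) := this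
        _ = 1/4 := by field_simp
        _ ≤ 1/2 := by norm_num
    · have h1 : min ((1:ℝ)/(4*((k:ℝ)+1))) (η/(4*((k:ℝ)+1))) ≤ η/(4*((k:ℝ)+1)) := min_le_right _ _
      have hk : (0:ℝ) < (k:ℝ)+1 := by positivity
      have h2 : ((k:ℝ)+1) * (η / (4*((k:ℝ)+1))) = η/4 := by field_simp
      nlinarith [hη, mul_le_mul_of_nonneg_left h1 hk.le]
  obtain ⟨s, hs⟩ : ∃ s : ℝ, s = ((k:ℝ)+1)*δ := ⟨_, rfl⟩
  have hspos : 0 ≤ s := by rw [hs]; positivity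
  rw [← hs] at hδ1 hδη
  set O := ⋂ i : Fin k, {U' : Grass d k | ∃ w : Rspace d, w ∈ U'.1 ∧ ‖w‖ = 1 ∧ ‖w - v i‖ < δ}
    with hO
  have hOopen : IsOpen O := isOpen_iInter_of_finite fun i => hit_open _ _
  have hUO : U ∈ O := by
    apply Set.mem_iInter.mpr
    intro i
    refine ⟨v i, SetLike.coe_mem _, ?_, by simpa using hδpos⟩
    have h0 := B.orthonormal.1 i
    simp only [hv]
    exact_mod_cast h0
  refine ⟨O, hOopen, hUO, ?_⟩
  intro U' hU'
  have hw : ∀ i : Fin k, ∃ w : Rspace d, w ∈ U'.1 ∧ ‖w‖ = 1 ∧ ‖w - v i‖ < δ :=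
    fun i => Set.mem_iInter.mp hU' i
  choose w hwmem hwnorm hwclose using hw
  -- the ambient-valued projection onto U'
  set Q : Rspace d →ₗ[ℝ] Rspace d :=
    (U'.1.subtype).comp (Submodule.orthogonalProjectionOnto U'.1).toLinearMap with hQ
  have hQval : ∀ u : Rspace d, Q u = (Submodule.orthogonalProjectionOnto U'.1 u : Rspace d) := fun u => rfl
  have hQmem : ∀ u : Rspace d, Q u ∈ U'.1 := fun u => SetLike.coe_mem _
  have hvQ : ∀ i, ‖v i - Q (v i)‖ ≤ δ := by
    intro i
    rw [hQval, ← infDist_sub]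
    refine (infDist_le_dist_of_mem (hwmem i)).trans ?_
    rw [dist_eq_norm, norm_sub_rev]
    exact (hwclose i).le
  -- key A
  have keyA : ∀ z : Rspace d, z ∈ U.1 → ‖z - Q z‖ ≤ s * ‖z‖ := by
    intro z hz
    set zz : U.1 := ⟨z, hz⟩ with hzz
    set a : Fin k → ℝ := fun i => B.repr zz i with ha
    have hsum : ∑ i, a i • v i = z := by
      have h1 := B.sum_repr zz
      have h2 := congrArg (Submodule.subtype U.1) h1
      rw [map_sum] at h2
      simpa [hv, ha] using h2
    have hzQz : z - Q z = ∑ i, a i • (v i - Q (v i)) := by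
      have h3 : Q z = ∑ i, a i • Q (v i) := by
        rw [← hsum, map_sum]
        simp [map_smul]
      rw [h3, ← hsum, ← Finset.sum_sub_distrib]
      congr 1
      ext i
      rw [smul_sub]
    have hnorm1 : ‖z - Q z‖ ≤ ∑ i, |a i| * δ := by
      rw [hzQz]
      refine (norm_sum_le _ _).trans ?_
      apply Finset.sum_le_sum
      intro i _
      rw [norm_smul, Real.norm_eq_abs]
      exact mul_le_mul_of_nonneg_left (hvQ i) (abs_nonneg _)
    have hnorm2 : ∑ i, |a i| ≤ ((k:ℝ)+1) * ‖z‖ := by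
      have hcs : (∑ i, |a i|) ^ 2 ≤ (k:ℝ) * ∑ i, |a i| ^ 2 := by
        have := sq_sum_le_card_mul_sum_sq (s := Finset.univ) (f := fun i => |a i|)
        simpa using this
      have hrepr : ∑ i, |a i| ^ 2 = ‖z‖ ^ 2 := by
        have h4 : ‖B.repr zz‖ = ‖zz‖ := LinearIsometryEquiv.norm_map _ _
        have h5 : ‖zz‖ = ‖z‖ := rfl
        have h6 : ‖B.repr zz‖ ^ 2 = ∑ i, |a i| ^ 2 := by
          rw [EuclideanSpace.norm_eq]
          rw [Real.sq_sqrt (by positivity)]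
          exact Finset.sum_congr rfl fun i _ => by rw [Real.norm_eq_abs]
        rw [← h6, h4, h5]
      rw [hrepr] at hcs
      have hsumpos : 0 ≤ ∑ i, |a i| := Finset.sum_nonneg fun i _ => abs_nonneg _
      have hk0 : (0:ℝ) ≤ (k:ℝ) := Nat.cast_nonneg k
      have hz0 : (0:ℝ) ≤ ‖z‖ := norm_nonneg z
      have hsq : (∑ i, |a i|) ^ 2 ≤ (((k:ℝ)+1) * ‖z‖)^2 := by nlinarith
      have h2 : (0:ℝ) ≤ ((k:ℝ)+1) * ‖z‖ := by positivity
      nlinarith [hsq, hsumpos, h2]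
    calc ‖z - Q z‖ ≤ ∑ i, |a i| * δ := hnorm1
      _ = (∑ i, |a i|) * δ := by rw [Finset.sum_mul]
      _ ≤ (((k:ℝ)+1) * ‖z‖) * δ := mul_le_mul_of_nonneg_right hnorm2 hδpos.le
      _ = s * ‖z‖ := by rw [hs]; ring
  -- key B : surjectivity with bound
  have keyB : ∀ y' : Rspace d, y' ∈ U'.1 → ∃ z : Rspace d, z ∈ U.1 ∧ Q z = y' ∧ ‖z‖ ≤ 2*‖y'‖ := by
    have hT : ∀ z : U.1, (((Submodule.orthogonalProjectionOnto U'.1).toLinearMap.comp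
        (U.1.subtype) : U.1 →ₗ[ℝ] U'.1) z : Rspace d) = Q (z : Rspace d) := fun z => rfl
    have hinj : Function.Injective ((Submodule.orthogonalProjectionOnto U'.1).toLinearMap.comp
        (U.1.subtype) : U.1 →ₗ[ℝ] U'.1) := by
      rw [← LinearMap.ker_eq_bot, LinearMap.ker_eq_bot']
      intro z hz0
      have h7 : Q (z : Rspace d) = 0 := by
        rw [← hT z, hz0]
        exact ZeroMemClass.coe_zero _
      have h8 := keyA (z : Rspace d) (SetLike.coe_mem z)
      rw [h7, sub_zero] at h8
      have h9 : ‖(z : Rspace d)‖ = 0 := by nlinarith [norm_nonneg (z : Rspace d)]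
      have h9' : (z : Rspace d) = 0 := norm_eq_zero.mp h9
      exact Subtype.ext (by simpa using h9')
    have hsurj : Function.Surjective ((Submodule.orthogonalProjectionOnto U'.1).toLinearMap.comp
        (U.1.subtype) : U.1 →ₗ[ℝ] U'.1) := by
      rw [← LinearMap.injective_iff_surjective_of_finrank_eq_finrank (by rw [U.2, U'.2])]
      exact hinj
    intro y' hy'
    obtain ⟨z, hzeq⟩ := hsurj ⟨y', hy'⟩
    refine ⟨(z : Rspace d), SetLike.coe_mem z, ?_, ?_⟩
    · rw [← hT z, hzeq]
    · have h10 : Q (z : Rspace d) = y' := by rw [← hT z, hzeq]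
      have h11 := keyA (z : Rspace d) (SetLike.coe_mem z)
      have h12 : ‖(z : Rspace d)‖ ≤ ‖(z : Rspace d) - Q (z : Rspace d)‖ + ‖Q (z:Rspace d)‖ := by
        have := norm_add_le ((z : Rspace d) - Q (z:Rspace d)) (Q (z:Rspace d))
        simpa using this
      rw [h10] at h12
      rw [h10] at h11
      nlinarith [norm_nonneg (z : Rspace d), norm_nonneg y',
        mul_le_mul_of_nonneg_right hδ1 (norm_nonneg (z : Rspace d))]
  constructor
  · -- cle U.1 U'.1 η
    intro u
    have hPu : (Submodule.orthogonalProjectionOnto U.1 u : Rspace d) ∈ U.1 := SetLike.coe_mem _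
    have h13 := keyA _ hPu
    have h14 : infDist u (U'.1 : Set (Rspace d)) ≤
        ‖u - (Submodule.orthogonalProjectionOnto U.1 u : Rspace d)‖ +
        ‖(Submodule.orthogonalProjectionOnto U.1 u : Rspace d) - Q (Submodule.orthogonalProjectionOnto U.1 u : Rspace d)‖ := by
      refine (infDist_le_dist_of_mem (hQmem (Submodule.orthogonalProjectionOnto U.1 u : Rspace d))).trans ?_
      rw [dist_eq_norm]
      calc ‖u - Q (Submodule.orthogonalProjectionOnto U.1 u : Rspace d)‖
          = ‖(u - (Submodule.orthogonalProjectionOnto U.1 u : Rspace d)) +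
            ((Submodule.orthogonalProjectionOnto U.1 u : Rspace d) - Q (Submodule.orthogonalProjectionOnto U.1 u : Rspace d))‖ := by
            congr 1; abel
        _ ≤ _ := norm_add_le _ _
    have h15 : ‖(Submodule.orthogonalProjectionOnto U.1 u : Rspace d)‖ ≤ ‖u‖ := norm_proj_le _ _
    have h16 : s * ‖(Submodule.orthogonalProjectionOnto U.1 u : Rspace d)‖ ≤ s * ‖u‖ :=
      mul_le_mul_of_nonneg_left h15 hspos
    rw [← infDist_sub] at h14
    have hsη : s ≤ η := by linarith
    have : s * ‖u‖ ≤ η * ‖u‖ := mul_le_mul_of_nonneg_right hsη (norm_nonneg u)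
    linarith
  · -- cle U'.1 U.1 η
    intro u
    obtain ⟨z, hzU, hzQ, hznorm⟩ := keyB (Q u) (hQmem u)
    have h17 : infDist u (U.1 : Set (Rspace d)) ≤ ‖u - Q u‖ + ‖Q u - z‖ := by
      refine (infDist_le_dist_of_mem hzU).trans ?_
      rw [dist_eq_norm]
      calc ‖u - z‖ = ‖(u - Q u) + (Q u - z)‖ := by congr 1; abel
        _ ≤ _ := norm_add_le _ _
    have h18 : ‖Q u - z‖ = ‖z - Q z‖ := by rw [hzQ, norm_sub_rev]
    have h19 := keyA z hzU
    have h20 : ‖Q u‖ ≤ ‖u‖ := by rw [hQval]; exact norm_proj_le _ _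
    have h21 : ‖u - Q u‖ = infDist u (U'.1 : Set (Rspace d)) := by
      rw [hQval, ← infDist_sub]
    have h22 : s * ‖z‖ ≤ s * (2 * ‖Q u‖) := mul_le_mul_of_nonneg_left hznorm hspos
    have h23 : s * (2*‖Q u‖) ≤ s * (2*‖u‖) := by nlinarith
    have h24 : 2*s*‖u‖ ≤ η * ‖u‖ := by nlinarith [norm_nonneg u]
    linarith [h17, h19, h18]

end BL

/-- Boyle–Lind: the homoclinic set along a subspace is
constant on each expansive component. -/
theorem homoclinic_set_constant_on_expansive_component {d k : ℕ} (hd : 1 ≤ d)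
    {X : Type*} [MetricSpace X] [CompactSpace X]
    (β : (Fin d → ℤ) → X ≃ₜ X)
    (hβ : ∀ m n : Fin d → ℤ, ∀ x : X, β (m + n) x = β m (β n x))
    (hβ0 : ∀ x : X, β 0 x = x)
    (y₀ : X) (V W : Grass d k)
    (hVW : W ∈ connectedComponentIn
      {U : Grass d k | ExpansiveAlong β (U.1 : Set (Rspace d))} V) :
    {x : X | HomoclinicAlong β (V.1 : Set (Rspace d)) y₀ x} =
    {x : X | HomoclinicAlong β (W.1 : Set (Rspace d)) y₀ x} := by
  classical
  set E := {U : Grass d k | ExpansiveAlong β (U.1 : Set (Rspace d))} with hE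
  have hVmem : V ∈ E := connectedComponentIn_nonempty_iff.mp ⟨W, hVW⟩
  set Δ : Grass d k → Set X :=
    fun U => {x : X | HomoclinicAlong β (U.1 : Set (Rspace d)) y₀ x} with hΔ
  have LC : ∀ U : Grass d k, ∃ O : Set (Grass d k), IsOpen O ∧ U ∈ O ∧
      (U ∈ E → ∀ U' ∈ O, Δ U' = Δ U) := by
    intro U
    by_cases hU : U ∈ E
    · obtain ⟨ε, hε, t, ht, hexp⟩ := hU
      obtain ⟨η, hηpos, t', ht', hmain⟩ := BL.main β hβ hβ0 U.1 ε t hε ht hexp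
      obtain ⟨O, hO, hUO, hOspec⟩ := BL.nbhd U hηpos
      refine ⟨O, hO, hUO, fun _ U' hU' => ?_⟩
      obtain ⟨h1, h2⟩ := hOspec U' hU'
      have hself : BL.cle U.1 U.1 η := BL.cle_self U.1 hηpos.le
      ext x
      simp only [hΔ, Set.mem_setOf_eq]
      constructor
      · intro hx
        have hdata := BL.widen β hβ U'.1 y₀ x hx t' ht'
        have hdata' : ∀ ε' > 0, ∃ R : ℝ, ∀ n : Fin d → ℤ,
            Metric.infDist (intVec n) (U'.1 : Set (Rspace d)) ≤ t' → R ≤ ‖intVec n‖ →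
            dist (β n x) (β n y₀) ≤ ε' := fun ε' hε' =>
          (hdata ε' hε').imp fun R hR n hn hRn => (hR n hn hRn).le
        have hout := hmain U'.1 U.1 h1 h2 hself hself x y₀ hdata'
        refine ⟨t', ht', fun ε₂ hε₂ => ?_⟩
        obtain ⟨R, hR⟩ := hout (ε₂/2) (by linarith)
        exact ⟨R, fun n hn hRn => lt_of_le_of_lt (hR n hn hRn) (by linarith)⟩
      · intro hx
        have hdata := BL.widen β hβ U.1 y₀ x hx t' ht'
        have hdata' : ∀ ε' > 0, ∃ R : ℝ, ∀ n : Fin d → ℤ,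
            Metric.infDist (intVec n) (U.1 : Set (Rspace d)) ≤ t' → R ≤ ‖intVec n‖ →
            dist (β n x) (β n y₀) ≤ ε' := fun ε' hε' =>
          (hdata ε' hε').imp fun R hR n hn hRn => (hR n hn hRn).le
        have hout := hmain U.1 U'.1 hself hself h1 h2 x y₀ hdata'
        refine ⟨t', ht', fun ε₂ hε₂ => ?_⟩
        obtain ⟨R, hR⟩ := hout (ε₂/2) (by linarith)
        exact ⟨R, fun n hn hRn => lt_of_le_of_lt (hR n hn hRn) (by linarith)⟩
    · exact ⟨Set.univ, isOpen_univ, trivial, fun h => absurd h hU⟩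
  choose O hOopen hOmem hOconst using LC
  by_cases hWV : Δ W = Δ V
  · exact hWV.symm
  exfalso
  set C := connectedComponentIn E V with hC
  set A := ⋃ (U : Grass d k) (_ : U ∈ C ∧ Δ U = Δ V), O U with hA
  set B := ⋃ (U : Grass d k) (_ : U ∈ C ∧ Δ U ≠ Δ V), O U with hB
  have hAop : IsOpen A := isOpen_iUnion fun U => isOpen_iUnion fun _ => hOopen U
  have hBop : IsOpen B := isOpen_iUnion fun U => isOpen_iUnion fun _ => hOopen U
  have hcover : C ⊆ A ∪ B := by
    intro U hUC
    by_cases h : Δ U = Δ V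
    · exact Or.inl (Set.mem_iUnion.mpr ⟨U, Set.mem_iUnion.mpr ⟨⟨hUC, h⟩, hOmem U⟩⟩)
    · exact Or.inr (Set.mem_iUnion.mpr ⟨U, Set.mem_iUnion.mpr ⟨⟨hUC, h⟩, hOmem U⟩⟩)
  have hVC : V ∈ C := mem_connectedComponentIn hVmem
  have hWC : W ∈ C := hVW
  have hneA : (C ∩ A).Nonempty :=
    ⟨V, hVC, Set.mem_iUnion.mpr ⟨V, Set.mem_iUnion.mpr ⟨⟨hVC, rfl⟩, hOmem V⟩⟩⟩
  have hneB : (C ∩ B).Nonempty :=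
    ⟨W, hWC, Set.mem_iUnion.mpr ⟨W, Set.mem_iUnion.mpr ⟨⟨hWC, hWV⟩, hOmem W⟩⟩⟩
  obtain ⟨z, hzC, hzA, hzB⟩ :=
    isPreconnected_connectedComponentIn A B hAop hBop hcover hneA hneB
  obtain ⟨U₁, hU₁⟩ := Set.mem_iUnion.mp hzA
  obtain ⟨⟨hU₁C, hΔ₁⟩, hzO₁⟩ := Set.mem_iUnion.mp hU₁
  obtain ⟨U₂, hU₂⟩ := Set.mem_iUnion.mp hzB
  obtain ⟨⟨hU₂C, hΔ₂⟩, hzO₂⟩ := Set.mem_iUnion.mp hU₂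
  have e₁ : Δ z = Δ U₁ := hOconst U₁ (connectedComponentIn_subset E V hU₁C) z hzO₁
  have e₂ : Δ z = Δ U₂ := hOconst U₂ (connectedComponentIn_subset E V hU₂C) z hzO₂
  exact hΔ₂ (e₂.symm.trans (e₁.trans hΔ₁))
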